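/- (Theorem 2, zero selling threshold without a later off-peak period) Suppose the time-of-use schedule consists of an initial off-peak period followed by an on-peak period extending to the end of the horizon (no off-peak period after the on-peak period). Then for every on-peak time t < T−1 the selling threshold vanishes: −π_t⁻ ∈ h_{t+1}(0), i.e., one may take δ_t = 0, so that in the net production zone the optimal EV charging is v* = min{v̄, y_t}. -/

import Mathlib

open MeasureTheory Set

/-- NEM X payment for net consumption `z` with buy price `pp` and sell price `pm`. -/
noncomputable def NEMPayment (pp pm z : ℝ) : ℝ := pp * max z 0 - pm * max (-z) 0

/-- The superdifferential of a function `f : ℝ → ℝ` (viewed as a concave function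
on `[0, ∞)`) at a point `y`. -/
def superdiff (f : ℝ → ℝ) (y : ℝ) : Set ℝ :=
  {s | ∀ z, 0 ≤ z → f z ≤ f y + s * (z - y)}

/-- Data of the EV-charging / flexible-consumption dynamic program over horizon
`{0, …, T-1}` with `K` flexible loads, under NEM time-of-use prices. -/
structure EVModel (K T : ℕ) (Ω : Type) [MeasurableSpace Ω] where
  /-- underlying probability measure -/
  μ : Measure Ω
  prob : IsProbabilityMeasure μ
  /-- consumption upper bounds -/
  dbar : Fin K → ℝ
  dbar_pos : ∀ i, 0 < dbar i
  /-- device utility functions -/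
  U : Fin K → ℝ → ℝ
  U_strictConcave : ∀ i, StrictConcaveOn ℝ (Icc 0 (dbar i)) (U i)
  U_strictMono : ∀ i, StrictMonoOn (U i) (Icc 0 (dbar i))
  U_diff : ∀ i, ∀ x ∈ Icc 0 (dbar i), DifferentiableWithinAt ℝ (U i) (Icc 0 (dbar i)) x
  U_contDeriv : ∀ i, ContinuousOn (fun x => derivWithin (U i) (Icc 0 (dbar i)) x) (Icc 0 (dbar i))
  U_zero : ∀ i, U i 0 = 0
  /-- renewable processes -/
  r : ℕ → Ω → ℝ
  r_meas : ∀ t, Measurable (r t)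
  r_nonneg : ∀ t ω, 0 ≤ r t ω
  r_int : ∀ t, Integrable (r t) μ
  r_indep : ProbabilityTheory.iIndepFun r μ
  /-- time-of-use buy prices `π_t⁺` -/
  pip : ℕ → ℝ
  /-- time-of-use sell prices `π_t⁻` -/
  pim : ℕ → ℝ
  /-- maximal per-period EV charge -/
  vbar : ℝ
  vbar_pos : 0 < vbar
  /-- per-unit penalty for unmet EV demand at the horizon -/
  γ : ℝ
  /-- `π_off⁻ = min_t π_t⁻` -/
  pioff : ℝ
  pioff_le : ∀ t < T, pioff ≤ pim t
  pioff_attained : ∃ t < T, pioff = pim t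
  /-- assumption A1 -/
  A1 : ∀ t < T, 0 < pim t ∧ pim t ≤ pip t ∧ pip t < γ

namespace EVModel

variable {K T : ℕ} {Ω : Type} [MeasurableSpace Ω]

/-- Stage reward `g_t(x_t, v, d)`. -/
noncomputable def stage (M : EVModel K T Ω) (t : ℕ) (rt v : ℝ) (d : Fin K → ℝ) : ℝ :=
  ∑ i, M.U i (d i) - NEMPayment (M.pip t) (M.pim t) (v + ∑ i, d i - rt)

/-- Feasible decisions `(v, d)` given remaining demand `y`. -/
def feas (M : EVModel K T Ω) (y : ℝ) : Set (ℝ × (Fin K → ℝ)) :=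
  {p | p.1 ∈ Icc 0 (min M.vbar y) ∧ ∀ i, p.2 i ∈ Icc 0 (M.dbar i)}

/-- Value function indexed by `k = T - 1 - t`, the number of remaining periods after
the current one. -/
noncomputable def W (M : EVModel K T Ω) : ℕ → ℝ → ℝ → ℝ
  | 0 => fun y rt => sSup ((fun p : ℝ × (Fin K → ℝ) =>
      M.stage (T - 1) rt p.1 p.2 - M.γ * (y - p.1)) '' M.feas y)
  | (k + 1) => fun y rt => sSup ((fun p : ℝ × (Fin K → ℝ) =>
      M.stage (T - 2 - k) rt p.1 p.2 +
        ∫ ω, M.W k (y - p.1) (M.r (T - 1 - k) ω) ∂M.μ) '' M.feas y)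

/-- Value function `V_t(y, r_t)` (the price argument is determined by `t`). -/
noncomputable def V (M : EVModel K T Ω) (t : ℕ) (y rt : ℝ) : ℝ := M.W (T - 1 - t) y rt

/-- Expected value function `V̄_t(y) = E[V_t(y, r_t, π_t)]`. -/
noncomputable def Vbar (M : EVModel K T Ω) (t : ℕ) (y : ℝ) : ℝ := ∫ ω, M.V t y (M.r t ω) ∂M.μ

/-- Objective of the Bellman equation at time `t` in state `(y, rt)`. -/
noncomputable def bellObj (M : EVModel K T Ω) (t : ℕ) (y rt : ℝ) (p : ℝ × (Fin K → ℝ)) : ℝ :=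
  if t = T - 1 then M.stage t rt p.1 p.2 - M.γ * (y - p.1)
  else M.stage t rt p.1 p.2 + ∫ ω, M.V (t + 1) (y - p.1) (M.r (t + 1) ω) ∂M.μ

/-- `(v, d)` is an optimal solution of the Bellman equation at time `t`. -/
def IsBellmanOpt (M : EVModel K T Ω) (t : ℕ) (y rt : ℝ) (p : ℝ × (Fin K → ℝ)) : Prop :=
  p ∈ M.feas y ∧ ∀ q ∈ M.feas y, M.bellObj t y rt q ≤ M.bellObj t y rt p

/-- Superdifferential `h_t` of the concave expected value function `V̄_t`. -/
noncomputable def h (M : EVModel K T Ω) (t : ℕ) (y : ℝ) : Set ℝ := superdiff (M.Vbar t) y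

end EVModel

/-! Backward induction shows that, when `a ≤ γ` and `a` is at most every remaining sell price,
each value function `W k` loses at least `a` per extra unit of EV demand:
`W k (y + z) ≤ W k y - a z`.  Given a decision `v` for demand `y + z`, cap the charge at
`min v y`: the uncharged part earns at least the sell price per unit, since NEM payments
have slope at least `π⁻`, and the rest of `z` is passed on to the continuation, which loses
at least `a` per unit by induction (terminally it loses `γ`).  On the on-peak period the
sell price is constant to the end of the horizon, so `a = π_t⁻` qualifies, and averaging
over `r_{t+1}` gives `V̄_{t+1}(z) ≤ V̄_{t+1}(0) - π_t⁻ z`. -/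

lemma NEMPayment_eq (pp pm z : ℝ) : NEMPayment pp pm z = pm * z + (pp - pm) * max z 0 := by
  unfold NEMPayment
  rcases le_total z 0 with h | h
  · rw [max_eq_right h, max_eq_left (neg_nonneg.2 h)]; ring
  · rw [max_eq_left h, max_eq_right (neg_nonpos.2 h)]; ring

lemma mul_sub_le_NEMPayment_sub {pp pm a b : ℝ} (hpm : pm ≤ pp) (hab : b ≤ a) :
    pm * (a - b) ≤ NEMPayment pp pm a - NEMPayment pp pm b := by
  rw [NEMPayment_eq, NEMPayment_eq]
  have : max b 0 ≤ max a 0 := max_le_max hab le_rfl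
  nlinarith [mul_nonneg (sub_nonneg.2 hpm) (sub_nonneg.2 this)]

namespace EVModel

variable {K T : ℕ} {Ω : Type} [MeasurableSpace Ω] (M : EVModel K T Ω)

instance : IsProbabilityMeasure M.μ := M.prob

lemma gamma_pos (hT : 0 < T) : 0 < M.γ := by
  obtain ⟨h₁, h₂, h₃⟩ := M.A1 0 hT
  linarith

section Feasibility

variable {M} {y : ℝ} {p : ℝ × (Fin K → ℝ)}

lemma zero_mem_feas (hy : 0 ≤ y) : ((0 : ℝ), fun _ => (0 : ℝ)) ∈ M.feas y :=
  ⟨⟨le_rfl, le_min M.vbar_pos.le hy⟩, fun i => ⟨le_rfl, (M.dbar_pos i).le⟩⟩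

lemma fst_le_of_mem_feas (hp : p ∈ M.feas y) : p.1 ≤ y :=
  hp.1.2.trans (min_le_right _ _)

lemma min_fst_mem_feas {z : ℝ} (hy : 0 ≤ y) (hp : p ∈ M.feas (y + z)) :
    (min p.1 y, p.2) ∈ M.feas y :=
  ⟨⟨le_min hp.1.1 hy, min_le_min_right y (hp.1.2.trans (min_le_left _ _))⟩, hp.2⟩

end Feasibility

section Stage

variable {s : ℕ} (hs : s < T)
include hs

lemma stage_le {y : ℝ} (rt : ℝ) {p : ℝ × (Fin K → ℝ)} (hp : p ∈ M.feas y) :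
    M.stage s rt p.1 p.2 ≤ ∑ i, M.U i (M.dbar i) + M.γ * max rt 0 := by
  obtain ⟨hpim, hpip, hγ⟩ := M.A1 s hs
  have hU : ∑ i, M.U i (p.2 i) ≤ ∑ i, M.U i (M.dbar i) :=
    Finset.sum_le_sum fun i _ => (M.U_strictMono i).monotoneOn (hp.2 i)
      (right_mem_Icc.2 (M.dbar_pos i).le) (hp.2 i).2
  have hd : 0 ≤ ∑ i, p.2 i := Finset.sum_nonneg fun i _ => (hp.2 i).1
  set w := p.1 + ∑ i, p.2 i - rt
  have hsold : max (-w) 0 ≤ max rt 0 := max_le_max (by linarith [hp.1.1]) le_rfl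
  have hbuy : 0 ≤ M.pip s * max w 0 := mul_nonneg (by linarith) (le_max_right _ _)
  have hsell : M.pim s * max (-w) 0 ≤ M.γ * max rt 0 :=
    mul_le_mul (by linarith) hsold (le_max_right _ _) (by linarith)
  simp only [stage, NEMPayment]
  linarith

lemma stage_zero_nonneg {rt : ℝ} (hrt : 0 ≤ rt) : 0 ≤ M.stage s rt 0 (fun _ => 0) := by
  have hpim := (M.A1 s hs).1
  simp only [stage, NEMPayment, M.U_zero, Finset.sum_const_zero, zero_add, zero_sub,
    neg_neg, max_eq_right (neg_nonpos.2 hrt), max_eq_left hrt]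
  nlinarith

lemma stage_monotone (v : ℝ) (d : Fin K → ℝ) : Monotone (fun rt => M.stage s rt v d) := by
  obtain ⟨hpim, hpip, -⟩ := M.A1 s hs
  intro a b hab
  have := mul_sub_le_NEMPayment_sub (a := v + ∑ i, d i - a) (b := v + ∑ i, d i - b) hpip
    (by linarith)
  simp only [stage]
  nlinarith

lemma stage_le_sub {v v' : ℝ} (hv : v' ≤ v) (d : Fin K → ℝ) (rt : ℝ) :
    M.stage s rt v d ≤ M.stage s rt v' d - M.pim s * (v - v') := by
  have := mul_sub_le_NEMPayment_sub (a := v + ∑ i, d i - rt) (b := v' + ∑ i, d i - rt)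
    (M.A1 s hs).2.1 (by linarith)
  simp only [stage]
  linarith [show v + ∑ i, d i - rt - (v' + ∑ i, d i - rt) = v - v' by ring]

end Stage

noncomputable def bellman (s : ℕ) (c : ℝ → ℝ) (y rt : ℝ) : ℝ :=
  sSup ((fun p : ℝ × (Fin K → ℝ) => M.stage s rt p.1 p.2 + c (y - p.1)) '' M.feas y)

lemma W_zero : M.W 0 = M.bellman (T - 1) (fun y => -(M.γ * y)) := by
  funext y rt
  simp only [W, bellman, sub_eq_add_neg]

lemma W_succ (k : ℕ) :
    M.W (k + 1) = M.bellman (T - 2 - k) (fun y => ∫ ω, M.W k y (M.r (T - 1 - k) ω) ∂M.μ) :=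
  rfl

section Bellman

variable {M} {s : ℕ} {c : ℝ → ℝ} {B : ℝ} {y rt : ℝ}

lemma le_bellman (hs : s < T) (hc : ∀ y, 0 ≤ y → c y ≤ B) {p : ℝ × (Fin K → ℝ)}
    (hp : p ∈ M.feas y) : M.stage s rt p.1 p.2 + c (y - p.1) ≤ M.bellman s c y rt := by
  refine le_csSup ⟨∑ i, M.U i (M.dbar i) + M.γ * max rt 0 + B, ?_⟩ ⟨p, hp, rfl⟩
  rintro _ ⟨q, hq, rfl⟩
  have := M.stage_le hs rt hq
  have := hc _ (sub_nonneg.2 (fst_le_of_mem_feas hq))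
  dsimp only
  linarith

lemma bellman_le (hy : 0 ≤ y) {b : ℝ}
    (h : ∀ p ∈ M.feas y, M.stage s rt p.1 p.2 + c (y - p.1) ≤ b) : M.bellman s c y rt ≤ b :=
  csSup_le (Set.Nonempty.image _ ⟨_, zero_mem_feas hy⟩)
    (by rintro _ ⟨p, hp, rfl⟩; exact h p hp)

lemma bellman_monotone (hs : s < T) (hc : ∀ y, 0 ≤ y → c y ≤ B) (hy : 0 ≤ y) :
    Monotone (M.bellman s c y) := fun _ _ hab =>
  bellman_le hy fun p hp =>
    (add_le_add_left (M.stage_monotone hs p.1 p.2 hab) _).trans (le_bellman hs hc hp)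

lemma bellman_le_add (hs : s < T) (hc : ∀ y, 0 ≤ y → c y ≤ B) (hy : 0 ≤ y) (hrt : 0 ≤ rt) :
    M.bellman s c y rt ≤ ∑ i, M.U i (M.dbar i) + B + M.γ * rt :=
  bellman_le hy fun p hp => by
    have := M.stage_le hs rt hp
    have := hc _ (sub_nonneg.2 (fst_le_of_mem_feas hp))
    rw [max_eq_left hrt] at *
    linarith

lemma neg_mul_le_bellman (hs : s < T) (hcB : ∀ y, 0 ≤ y → c y ≤ B)
    (hc : ∀ y, 0 ≤ y → -(M.γ * y) ≤ c y) (hy : 0 ≤ y) (hrt : 0 ≤ rt) :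
    -(M.γ * y) ≤ M.bellman s c y rt := by
  have hidle := le_bellman (rt := rt) hs hcB (zero_mem_feas (M := M) hy)
  have := M.stage_zero_nonneg hs hrt
  have := hc y hy
  simp only [sub_zero] at hidle
  linarith

lemma bellman_add_le (hs : s < T) (hcB : ∀ y, 0 ≤ y → c y ≤ B) {a : ℝ} (ha : a ≤ M.pim s)
    (hc : ∀ y w, 0 ≤ y → 0 ≤ w → c (y + w) ≤ c y - a * w) {z : ℝ} (hy : 0 ≤ y) (hz : 0 ≤ z) :
    M.bellman s c (y + z) rt ≤ M.bellman s c y rt - a * z := by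
  refine bellman_le (by linarith) fun p hp => ?_
  set v' := min p.1 y
  have hv' : v' ≤ p.1 := min_le_left _ _
  have hcharged : p.1 - z ≤ v' := le_min (by linarith) (by linarith [fst_le_of_mem_feas hp])
  have hstage := M.stage_le_sub hs hv' p.2 rt
  have hcont := hc (y - v') (z - (p.1 - v')) (sub_nonneg.2 (min_le_right _ _)) (by linarith)
  have hle := le_bellman (rt := rt) hs hcB (min_fst_mem_feas hy hp)
  rw [show y - v' + (z - (p.1 - v')) = y + z - p.1 by ring] at hcont
  nlinarith [mul_le_mul_of_nonneg_right ha (sub_nonneg.2 hv')]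

end Bellman

/-- Monotonicity in `rt` makes `ω ↦ f y (r s ω)` measurable, and the two bounds make it
integrable. -/
structure ValueBounds (f : ℝ → ℝ → ℝ) : Prop where
  monotone : ∀ y, 0 ≤ y → Monotone (f y)
  le : ∃ C, ∀ y rt, 0 ≤ y → 0 ≤ rt → f y rt ≤ C + M.γ * rt
  ge : ∀ y rt, 0 ≤ y → 0 ≤ rt → -(M.γ * y) ≤ f y rt

namespace ValueBounds

variable {M} {f : ℝ → ℝ → ℝ} (hf : M.ValueBounds f) {y : ℝ}
include hf

lemma integrable (hy : 0 ≤ y) (s : ℕ) : Integrable (fun ω => f y (M.r s ω)) M.μ := by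
  obtain ⟨C, hC⟩ := hf.le
  exact integrable_of_le_of_le (((hf.monotone y hy).measurable.comp (M.r_meas s)).aestronglyMeasurable)
    (ae_of_all _ fun ω => hf.ge y _ hy (M.r_nonneg s ω))
    (ae_of_all _ fun ω => hC y _ hy (M.r_nonneg s ω))
    (integrable_const _) ((integrable_const C).add ((M.r_int s).const_mul M.γ))

lemma integral_le (s : ℕ) : ∃ B, ∀ y, 0 ≤ y → ∫ ω, f y (M.r s ω) ∂M.μ ≤ B := by
  obtain ⟨C, hC⟩ := hf.le
  refine ⟨C + M.γ * ∫ ω, M.r s ω ∂M.μ, fun y hy => ?_⟩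
  have hg := (integrable_const C).add ((M.r_int s).const_mul M.γ)
  calc ∫ ω, f y (M.r s ω) ∂M.μ ≤ ∫ ω, C + M.γ * M.r s ω ∂M.μ :=
        integral_mono (hf.integrable hy s) hg fun ω => hC y _ hy (M.r_nonneg s ω)
    _ = C + M.γ * ∫ ω, M.r s ω ∂M.μ := by
        rw [integral_add (integrable_const C) ((M.r_int s).const_mul M.γ), integral_const,
          integral_const_mul, probReal_univ, one_smul]

lemma neg_mul_le_integral (hy : 0 ≤ y) (s : ℕ) : -(M.γ * y) ≤ ∫ ω, f y (M.r s ω) ∂M.μ := by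
  have := integral_mono (integrable_const (-(M.γ * y))) (hf.integrable hy s)
    fun ω => hf.ge y _ hy (M.r_nonneg s ω)
  rwa [integral_const, probReal_univ, one_smul] at this

lemma integral_add_le {z a : ℝ} (hy : 0 ≤ y) (hz : 0 ≤ z)
    (h : ∀ rt, f (y + z) rt ≤ f y rt - a * z) (s : ℕ) :
    ∫ ω, f (y + z) (M.r s ω) ∂M.μ ≤ ∫ ω, f y (M.r s ω) ∂M.μ - a * z := by
  have : ∫ ω, f (y + z) (M.r s ω) ∂M.μ ≤ ∫ ω, (f y (M.r s ω) - a * z) ∂M.μ :=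
    integral_mono (hf.integrable (add_nonneg hy hz) s)
      ((hf.integrable hy s).sub (integrable_const (a * z))) fun ω => h (M.r s ω)
  rwa [integral_sub (hf.integrable hy s) (integrable_const _), integral_const, probReal_univ,
    one_smul] at this

end ValueBounds

lemma valueBounds_bellman {s : ℕ} (hs : s < T) {c : ℝ → ℝ} {B : ℝ}
    (hcB : ∀ y, 0 ≤ y → c y ≤ B) (hc : ∀ y, 0 ≤ y → -(M.γ * y) ≤ c y) :
    M.ValueBounds (M.bellman s c) where
  monotone _ hy := bellman_monotone hs hcB hy
  le := ⟨_, fun _ _ hy hrt => bellman_le_add hs hcB hy hrt⟩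
  ge _ _ hy hrt := neg_mul_le_bellman hs hcB hc hy hrt

lemma valueBounds_W (hT : 0 < T) (k : ℕ) : M.ValueBounds (M.W k) := by
  induction k with
  | zero =>
    rw [W_zero]
    refine M.valueBounds_bellman (by omega) (B := 0) (fun y hy => ?_) fun _ _ => le_rfl
    nlinarith [M.gamma_pos hT]
  | succ k hW =>
    obtain ⟨B, hB⟩ := hW.integral_le (T - 1 - k)
    rw [W_succ]
    exact M.valueBounds_bellman (by omega) hB fun y hy => hW.neg_mul_le_integral hy _

lemma W_add_le (hT : 0 < T) {a : ℝ} (haγ : a ≤ M.γ) (k : ℕ)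
    (ha : ∀ j ≤ k, a ≤ M.pim (T - 1 - j)) {y z : ℝ} (hy : 0 ≤ y) (hz : 0 ≤ z) (rt : ℝ) :
    M.W k (y + z) rt ≤ M.W k y rt - a * z := by
  induction k generalizing y z rt with
  | zero =>
    rw [W_zero]
    refine bellman_add_le (by omega) (B := 0) (fun y hy => ?_) (ha 0 le_rfl)
      (fun y w _ hw => ?_) hy hz
    · nlinarith [M.gamma_pos hT]
    · nlinarith
  | succ k ih =>
    have hW := M.valueBounds_W hT k
    obtain ⟨B, hB⟩ := hW.integral_le (T - 1 - k)
    have has : a ≤ M.pim (T - 2 - k) := by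
      simpa [show T - 1 - (k + 1) = T - 2 - k by omega] using ha (k + 1) le_rfl
    rw [W_succ]
    exact bellman_add_le (by omega) hB has
      (fun y w hy hw => hW.integral_add_le hy hw (ih (fun j hj => ha j (by omega)) hy hw) _) hy hz

end EVModel

theorem thm2_zero_selling_threshold_general (K T : ℕ) (Ω : Type) [MeasurableSpace Ω]
    (M : EVModel K T Ω)
    (t₀ : ℕ)
    (πonp πonm : ℝ)
    (hon : ∀ s, t₀ ≤ s → s < T → M.pip s = πonp ∧ M.pim s = πonm)
    (t : ℕ) (hton : t₀ ≤ t) (ht : t < T - 1) :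
    -M.pim t ∈ M.h (t + 1) 0 := by
  have hT : 0 < T := by omega
  obtain ⟨-, hpip, hpipγ⟩ := M.A1 t (by omega)
  have honpeak : ∀ j ≤ T - 1 - (t + 1), M.pim t ≤ M.pim (T - 1 - j) := fun j hj =>
    ((hon t hton (by omega)).2.trans (hon _ (by omega) (by omega)).2.symm).le
  intro z hz
  have := (M.valueBounds_W hT _).integral_add_le le_rfl hz
    (M.W_add_le hT (hpip.trans hpipγ.le) _ honpeak le_rfl hz) (t + 1)
  simp only [EVModel.Vbar, EVModel.V, zero_add, sub_zero] at this ⊢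
  linarith

/-- **Theorem 2 (zero selling threshold without a later off-peak period).**
Suppose the TOU schedule is an initial off-peak period `{0, …, t₀-1}` followed by an
on-peak period `{t₀, …, T-1}` extending to the end of the horizon.  Then for every
on-peak time `t < T - 1` the selling threshold vanishes: `-π_t⁻ ∈ h_{t+1}(0)`, i.e.
one may take `δ_t = 0`, so that in the net production zone the optimal EV charging is
`v* = min {v̄, y_t}`. -/
theorem thm2_zero_selling_threshold (K T : ℕ) (Ω : Type) [MeasurableSpace Ω]
    (M : EVModel K T Ω)
    (t₀ : ℕ) (ht₀ : t₀ < T)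
    (πoffp πoffm πonp πonm : ℝ)
    (hoff : ∀ s < t₀, M.pip s = πoffp ∧ M.pim s = πoffm)
    (hon : ∀ s, t₀ ≤ s → s < T → M.pip s = πonp ∧ M.pim s = πonm)
    (hpp : πoffp ≤ πonp) (hpm : πoffm ≤ πonm)
    (t : ℕ) (hton : t₀ ≤ t) (ht : t < T - 1) :
    -M.pim t ∈ M.h (t + 1) 0 :=
  thm2_zero_selling_threshold_general K T Ω M t₀ πonp πonm hon t hton ht
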